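/- arXiv:1710.05996 — 3 statements merged into one kernel-verified Lean document; each statement's English description precedes it below -/
import Mathlib

section
/- Let $a \ge 2$ be an integer, and suppose modules $E_1,\dots,E_a$ and $G_0,G_1,\dots,G_a$ over a Noetherian local ring fit into short exact sequences $0 \to E_i \to G_{i-1} \to G_i \to 0$ for $1 \le i \le a$. If $\operatorname{depth}(G_a) \ge \operatorname{depth}(E_a)$ and $\operatorname{depth}(E_i) \ge \operatorname{depth}(E_{i-1})$ for all $2 \le i \le a$, then $\operatorname{depth}(G_0) = \operatorname{depth}(E_1)$. -/
/-!
Depth lemma: for a short exact sequence `0 → E → F → G → 0` of finite modules over a Noetherian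
local ring with `depth E ≤ depth G`, one has `depth F = depth E`. Both inequalities go by
induction, reducing modulo an element of the maximal ideal regular on all three modules (prime
avoidance over their finitely many associated primes). The reduced sequence stays exact, and
depth drops by at most one modulo a regular element, because regular sequences in the maximal
ideal can be permuted. Going down the chain from `G_a`, the monotonicity of `depth E_i` keeps
`depth E_i ≤ depth G_i`, so each sequence gives `depth G_{i-1} = depth E_i`.
-/

open RingTheory.Sequence

/-- The depth of a module `M` over a local ring `R`: the supremum of lengths of (weakly)
regular sequences on `M` consisting of elements of the maximal ideal. -/
noncomputable def mdepth (R : Type*) (M : Type*) [CommRing R] [IsLocalRing R]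
    [AddCommGroup M] [Module R M] : ℕ∞ :=
  sSup {d : ℕ∞ | ∃ rs : List R, (∀ r ∈ rs, r ∈ IsLocalRing.maximalIdeal R) ∧
    IsWeaklyRegular M rs ∧ (rs.length : ℕ∞) = d}

open IsLocalRing Function Pointwise

theorem RingTheory.Sequence.IsWeaklyRegular.take {R M : Type*} [CommRing R] [AddCommGroup M]
    [Module R M] {rs : List R} (h : IsWeaklyRegular M rs) (k : ℕ) :
    IsWeaklyRegular M (rs.take k) := by
  rw [← List.take_append_drop k rs, isWeaklyRegular_append_iff] at h
  exact h.1

theorem QuotSMulTop.eq_zero_of_smul_eq_zero {R M : Type*} [CommRing R] [AddCommGroup M]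
    [Module R M] {r x y : R} (hr : IsSMulRegular M r) (hxy : IsWeaklyRegular M [x, y])
    {u : QuotSMulTop r M} (hx : x • u = 0) (hy : y • u = 0) : u = 0 := by
  rw [isWeaklyRegular_cons_iff, isWeaklyRegular_singleton_iff] at hxy
  obtain ⟨hxM, hyMx⟩ := hxy
  have mk_eq_zero {N : Submodule R M} {m : M} : N.mkQ m = 0 ↔ m ∈ N :=
    Submodule.Quotient.mk_eq_zero N
  obtain ⟨u, rfl⟩ := Submodule.mkQ_surjective _ u
  have divisible_by_r {s : R} (hs : s • (r • ⊤ : Submodule R M).mkQ u = 0) :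
      ∃ v, r • v = s • u := by
    rw [← map_smul, mk_eq_zero, Submodule.mem_smul_pointwise_iff_exists] at hs
    obtain ⟨v, -, hv⟩ := hs
    exact ⟨v, hv⟩
  obtain ⟨v₁, hv₁⟩ := divisible_by_r hx
  obtain ⟨v₂, hv₂⟩ := divisible_by_r hy
  have cross : y • v₁ = x • v₂ := hr <| by
    simp only [smul_comm r, hv₁, hv₂, smul_comm x y]
  have hv₁_mem : v₁ ∈ (x • ⊤ : Submodule R M) := by
    rw [← mk_eq_zero]
    refine hyMx.right_eq_zero_of_smul ?_
    rw [← map_smul, cross, mk_eq_zero]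
    exact Submodule.smul_mem_pointwise_smul v₂ x ⊤ trivial
  obtain ⟨w, -, rfl⟩ := (Submodule.mem_smul_pointwise_iff_exists _ _ _).mp hv₁_mem
  have hu : u = r • w := hxM (show x • u = x • r • w by rw [← hv₁, smul_comm])
  rw [hu, mk_eq_zero]
  exact Submodule.smul_mem_pointwise_smul w r ⊤ trivial

theorem QuotSMulTop.map_injective {R E F G : Type*} [CommRing R] [AddCommGroup E] [Module R E]
    [AddCommGroup F] [Module R F] [AddCommGroup G] [Module R G] {f : E →ₗ[R] F} {g : F →ₗ[R] G}
    {r : R} (hf : Injective f) (hfg : Exact f g) (hr : IsSMulRegular G r) :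
    Injective (QuotSMulTop.map r f) := by
  have := QuotSMulTop.map_first_exact_on_four_term_exact_of_isSMulRegular_last
    ((LinearMap.exact_zero_iff_injective PUnit f).mpr hf) hfg hr
  rwa [map_zero, LinearMap.exact_zero_iff_injective] at this

section Depth

variable {R M : Type*} [CommRing R] [IsLocalRing R] [AddCommGroup M] [Module R M]

theorem le_mdepth_iff {n : ℕ} : (n : ℕ∞) ≤ mdepth R M ↔
    ∃ rs : List R, (∀ r ∈ rs, r ∈ maximalIdeal R) ∧ IsWeaklyRegular M rs ∧ rs.length = n := by
  refine ⟨fun h => ?_, fun ⟨rs, hm, hreg, hlen⟩ => le_sSup ⟨rs, hm, hreg, by rw [hlen]⟩⟩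
  by_contra hno
  cases n with
  | zero => exact hno ⟨[], by simp, .nil R M, rfl⟩
  | succ k =>
    have hbound : mdepth R M ≤ k := by
      refine sSup_le ?_
      rintro _ ⟨rs, hm, hreg, rfl⟩
      by_contra! hlong
      exact hno ⟨rs.take (k + 1), fun r hr => hm r (List.mem_of_mem_take hr), hreg.take _,
        List.length_take_of_le (by exact_mod_cast Order.add_one_le_of_lt hlong)⟩
    have := h.trans hbound
    norm_cast at this
    omega

theorem succ_le_mdepth_iff {n : ℕ} : ((n + 1 : ℕ) : ℕ∞) ≤ mdepth R M ↔
    ∃ r ∈ maximalIdeal R, IsSMulRegular M r ∧ (n : ℕ∞) ≤ mdepth R (QuotSMulTop r M) := by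
  simp only [le_mdepth_iff]
  constructor
  · rintro ⟨_ | ⟨r, rs⟩, hm, hreg, hlen⟩
    · simp at hlen
    · rw [isWeaklyRegular_cons_iff] at hreg
      obtain ⟨hr, hm⟩ := List.forall_mem_cons.mp hm
      exact ⟨r, hr, hreg.1, rs, hm, hreg.2, by simpa using hlen⟩
  · rintro ⟨r, hr, hreg, rs, hm, hrs, hlen⟩
    exact ⟨r :: rs, List.forall_mem_cons.mpr ⟨hr, hm⟩, IsWeaklyRegular.cons hreg hrs,
      by simp [hlen]⟩

theorem exists_isSMulRegular_of_succ_le_mdepth {n : ℕ} (h : ((n + 1 : ℕ) : ℕ∞) ≤ mdepth R M) :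
    ∃ r ∈ maximalIdeal R, IsSMulRegular M r := by
  obtain ⟨r, hr, hreg, -⟩ := succ_le_mdepth_iff.mp h
  exact ⟨r, hr, hreg⟩

end Depth

section Noetherian

variable {R M N : Type*} [CommRing R] [IsNoetherianRing R] [IsLocalRing R]
  [AddCommGroup M] [Module R M] [Module.Finite R M]
  [AddCommGroup N] [Module R N] [Module.Finite R N]

theorem exists_isSMulRegular_iff_maximalIdeal_notMem_associatedPrimes :
    (∃ r ∈ maximalIdeal R, IsSMulRegular M r) ↔ maximalIdeal R ∉ associatedPrimes R M := by
  rw [← Ideal.subset_iUnion_iff_mem_of_isMaximal_of_finite (associatedPrimes.finite R M)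
    (maximalIdeal R) (maximalIdeal R) (fun _ hp _ _ => hp.isPrime) (maximalIdeal.isMaximal R).ne_top
    (maximalIdeal.isMaximal R).ne_top, biUnion_associatedPrimes_eq_compl_regular]
  simp [Set.subset_def]

theorem exists_isSMulRegular_prod (hM : ∃ r ∈ maximalIdeal R, IsSMulRegular M r)
    (hN : ∃ r ∈ maximalIdeal R, IsSMulRegular N r) :
    ∃ r ∈ maximalIdeal R, IsSMulRegular (M × N) r := by
  rw [exists_isSMulRegular_iff_maximalIdeal_notMem_associatedPrimes] at *
  rw [associatedPrimes.prod]
  exact fun h => h.elim hM hN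

theorem exists_isSMulRegular_quotSMulTop_of_two_le_mdepth {r : R} (hr : IsSMulRegular M r)
    (h2 : (2 : ℕ∞) ≤ mdepth R M) :
    ∃ s ∈ maximalIdeal R, IsSMulRegular (QuotSMulTop r M) s := by
  rw [exists_isSMulRegular_iff_maximalIdeal_notMem_associatedPrimes]
  intro hass
  obtain ⟨-, u, hu⟩ := isAssociatedPrime_iff.mp hass
  have kills {s : R} (hs : s ∈ maximalIdeal R) : s • u = 0 := by
    rwa [hu, Submodule.mem_colon_singleton, Submodule.mem_bot] at hs
  obtain ⟨rs, hm, hxy, hlen⟩ := (le_mdepth_iff (n := 2)).mp h2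
  obtain ⟨x, y, rfl⟩ := List.length_eq_two.mp hlen
  have hu0 : u = 0 := QuotSMulTop.eq_zero_of_smul_eq_zero hr hxy (kills (hm x (by simp)))
    (kills (hm y (by simp)))
  apply (maximalIdeal.isMaximal R).ne_top
  rw [hu, hu0, eq_top_iff]
  intro s _
  simp [Submodule.mem_colon_singleton]

theorem RingTheory.Sequence.IsWeaklyRegular.swap_of_mem_maximalIdeal {a b : R} {rs : List R}
    (h : IsWeaklyRegular M (a :: b :: rs)) (hm : ∀ s ∈ a :: b :: rs, s ∈ maximalIdeal R) :
    IsWeaklyRegular M (b :: a :: rs) :=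
  isWeaklyRegular_of_perm_of_subset_maximalIdeal h (List.Perm.swap b a rs) hm

theorem exists_cons_isWeaklyRegular_of_succ_le_mdepth (n : ℕ) {r : R}
    (hrm : r ∈ maximalIdeal R) (hr : IsSMulRegular M r) (h : ((n + 1 : ℕ) : ℕ∞) ≤ mdepth R M) :
    ∃ rs : List R, (∀ s ∈ rs, s ∈ maximalIdeal R) ∧ IsWeaklyRegular M (r :: rs) ∧
      rs.length = n := by
  induction n generalizing M r with
  | zero => exact ⟨[], by simp, (isWeaklyRegular_singleton_iff M r).mpr hr, rfl⟩
  | succ n ih =>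
    obtain ⟨x, hxm, hx, hdx⟩ := succ_le_mdepth_iff.mp h
    have two_le : (2 : ℕ∞) ≤ mdepth R M := le_trans (by norm_cast; omega) h
    obtain ⟨y, hym, hy⟩ := exists_isSMulRegular_prod ⟨x, hxm, hx⟩ <| exists_isSMulRegular_prod
      (exists_isSMulRegular_quotSMulTop_of_two_le_mdepth hr two_le)
      (exists_isSMulRegular_of_succ_le_mdepth hdx)
    simp only [Prod.isSMulRegular_iff] at hy
    obtain ⟨hyM, hyMr, hyMx⟩ := hy
    -- Permuting regular sequences moves `y` in front of both `x :: ys` and `r`, so the claim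
    -- reduces to `M ⧸ y M`, which has depth `n + 1` and on which `r` is regular.
    obtain ⟨ys, hysm, hys, hyslen⟩ := ih hym hyMx hdx
    have hyx : IsWeaklyRegular M (y :: x :: ys) :=
      (IsWeaklyRegular.cons hx hys).swap_of_mem_maximalIdeal (by simp_all)
    rw [isWeaklyRegular_cons_iff] at hyx
    have hry : IsWeaklyRegular M [r, y] :=
      IsWeaklyRegular.cons hr ((isWeaklyRegular_singleton_iff _ y).mpr hyMr)
    have hyr : IsWeaklyRegular M [y, r] := hry.swap_of_mem_maximalIdeal (by simp_all)
    rw [isWeaklyRegular_cons_iff, isWeaklyRegular_singleton_iff] at hyr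
    obtain ⟨zs, hzsm, hzs, hzslen⟩ := ih hrm hyr.2 <|
      le_mdepth_iff.mpr ⟨x :: ys, by simp_all, hyx.2, by simp [hyslen]⟩
    exact ⟨y :: zs, by simp_all,
      (IsWeaklyRegular.cons hyM hzs).swap_of_mem_maximalIdeal (by simp_all), by simp [hzslen]⟩

theorem le_mdepth_quotSMulTop {n : ℕ} {r : R} (hrm : r ∈ maximalIdeal R)
    (hr : IsSMulRegular M r) (h : ((n + 1 : ℕ) : ℕ∞) ≤ mdepth R M) :
    (n : ℕ∞) ≤ mdepth R (QuotSMulTop r M) := by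
  obtain ⟨rs, hm, hreg, hlen⟩ := exists_cons_isWeaklyRegular_of_succ_le_mdepth n hrm hr h
  exact le_mdepth_iff.mpr ⟨rs, hm, ((isWeaklyRegular_cons_iff M r rs).mp hreg).2, hlen⟩

end Noetherian

section ShortExact

variable {R : Type*} [CommRing R] [IsNoetherianRing R] [IsLocalRing R]
  {E F G : Type*} [AddCommGroup E] [Module R E] [Module.Finite R E]
  [AddCommGroup F] [Module R F] [Module.Finite R F]
  [AddCommGroup G] [Module R G] [Module.Finite R G]

theorem le_mdepth_of_exact (n : ℕ) {f : E →ₗ[R] F} {g : F →ₗ[R] G} (hf : Injective f)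
    (hfg : Exact f g) (hg : Surjective g) (hE : (n : ℕ∞) ≤ mdepth R E)
    (hG : (n : ℕ∞) ≤ mdepth R G) : (n : ℕ∞) ≤ mdepth R F := by
  induction n generalizing E F G with
  | zero => simp
  | succ n ih =>
    obtain ⟨r, hrm, hr⟩ := exists_isSMulRegular_prod
      (exists_isSMulRegular_of_succ_le_mdepth hE) (exists_isSMulRegular_of_succ_le_mdepth hG)
    rw [Prod.isSMulRegular_iff] at hr
    obtain ⟨hrE, hrG⟩ := hr
    refine succ_le_mdepth_iff.mpr ⟨r, hrm,
      isSMulRegular_of_range_eq_ker hf hfg.linearMap_ker_eq.symm hrE hrG, ?_⟩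
    exact ih (QuotSMulTop.map_injective hf hfg hrG) (QuotSMulTop.map_exact r hfg hg)
      (QuotSMulTop.map_surjective r hg) (le_mdepth_quotSMulTop hrm hrE hE)
      (le_mdepth_quotSMulTop hrm hrG hG)

theorem succ_le_mdepth_left_of_exact (n : ℕ) {f : E →ₗ[R] F} {g : F →ₗ[R] G}
    (hf : Injective f) (hfg : Exact f g) (hg : Surjective g)
    (hF : ((n + 1 : ℕ) : ℕ∞) ≤ mdepth R F) (hG : (n : ℕ∞) ≤ mdepth R G) :
    ((n + 1 : ℕ) : ℕ∞) ≤ mdepth R E := by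
  induction n generalizing E F G with
  | zero =>
    obtain ⟨r, hrm, hr⟩ := exists_isSMulRegular_of_succ_le_mdepth hF
    exact succ_le_mdepth_iff.mpr ⟨r, hrm, hr.of_injective f hf, by simp⟩
  | succ n ih =>
    obtain ⟨s, hsm, hsF⟩ := exists_isSMulRegular_of_succ_le_mdepth hF
    obtain ⟨r, hrm, hr⟩ := exists_isSMulRegular_prod ⟨s, hsm, hsF.of_injective f hf⟩
      (exists_isSMulRegular_prod ⟨s, hsm, hsF⟩ (exists_isSMulRegular_of_succ_le_mdepth hG))
    simp only [Prod.isSMulRegular_iff] at hr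
    obtain ⟨hrE, hrF, hrG⟩ := hr
    refine succ_le_mdepth_iff.mpr ⟨r, hrm, hrE, ?_⟩
    exact ih (QuotSMulTop.map_injective hf hfg hrG) (QuotSMulTop.map_exact r hfg hg)
      (QuotSMulTop.map_surjective r hg) (le_mdepth_quotSMulTop hrm hrF hF)
      (le_mdepth_quotSMulTop hrm hrG hG)

theorem mdepth_eq_of_exact {f : E →ₗ[R] F} {g : F →ₗ[R] G} (hf : Injective f) (hfg : Exact f g)
    (hg : Surjective g) (h : mdepth R E ≤ mdepth R G) : mdepth R F = mdepth R E := by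
  refine le_antisymm (not_lt.mp fun hlt => ?_)
    (ENat.forall_natCast_le_iff_le.mp fun n hn => le_mdepth_of_exact n hf hfg hg hn (hn.trans h))
  obtain ⟨k, hk⟩ := ENat.ne_top_iff_exists.mp (ne_top_of_lt hlt)
  rw [← hk] at hlt h
  have := succ_le_mdepth_left_of_exact k hf hfg hg (by exact_mod_cast Order.add_one_le_of_lt hlt) h
  rw [← hk] at this
  norm_cast at this
  omega

end ShortExact

theorem castSucc_eq_of_monotone_of_last_le {α : Type*} [Preorder α] {n : ℕ} {e : Fin (n + 1) → α}
    {g : Fin (n + 2) → α} (step : ∀ i, e i ≤ g i.succ → g i.castSucc = e i)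
    (hmono : ∀ i : Fin n, e i.castSucc ≤ e i.succ) (hlast : e (Fin.last n) ≤ g (Fin.last (n + 1)))
    (i : Fin (n + 1)) : g i.castSucc = e i := by
  induction i using Fin.reverseInduction with
  | last => exact step _ (by rwa [Fin.succ_last])
  | cast i ih => exact step _ ((hmono i).trans (by rw [Fin.succ_castSucc, ih]))

-- `E i` and `G i` are the paper's `E_{i+1}` and `G_i`: the sequences are
-- `0 → E i → G i.castSucc → G i.succ → 0`.
/-- Given a chain of short exact sequences `0 → E i → G i → G (i+1) → 0` (for `i = 0,…,a-1`,
corresponding to `E_1,…,E_a` and `G_0,…,G_a` in 1-based indexing) of finitely generated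
modules over a Noetherian local ring, if `depth (G a) ≥ depth (E a)` and the depths of the
`E i` are increasing, then `depth (G 0) = depth (E 1)`. -/
theorem stmt3 (R : Type*) [CommRing R] [IsNoetherianRing R] [IsLocalRing R]
    (a : ℕ) (ha : 2 ≤ a)
    (E : Fin a → Type*) [∀ i, AddCommGroup (E i)] [∀ i, Module R (E i)]
    [∀ i, Module.Finite R (E i)]
    (G : Fin (a + 1) → Type*) [∀ i, AddCommGroup (G i)] [∀ i, Module R (G i)]
    [∀ i, Module.Finite R (G i)]
    (f : ∀ i : Fin a, E i →ₗ[R] G i.castSucc)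
    (g : ∀ i : Fin a, G i.castSucc →ₗ[R] G i.succ)
    (hf : ∀ i, Function.Injective (f i)) (hg : ∀ i, Function.Surjective (g i))
    (hfg : ∀ i, LinearMap.range (f i) = LinearMap.ker (g i))
    (hlast : mdepth R (G (Fin.last a)) ≥ mdepth R (E ⟨a - 1, by omega⟩))
    (hmono : ∀ i : Fin a, ∀ h : (i : ℕ) + 1 < a,
      mdepth R (E ⟨(i : ℕ) + 1, h⟩) ≥ mdepth R (E i)) :
    mdepth R (G 0) = mdepth R (E ⟨0, by omega⟩) := by
  obtain ⟨b, rfl⟩ : ∃ b, a = b + 1 := ⟨a - 1, by omega⟩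
  refine castSucc_eq_of_monotone_of_last_le (e := fun i => mdepth R (E i))
    (g := fun i => mdepth R (G i)) (fun i => mdepth_eq_of_exact (hf i)
      (LinearMap.exact_iff.mpr (hfg i).symm) (hg i)) (fun i => hmono i.castSucc i.succ.isLt) hlast 0
end

section
/- Let $k \ge 2$, $0 \le i \le k-1$, and $n \ge 3k+2$. In $S = K[x_1,\dots,x_n]$, the colon ideal $(I(P_n^k) : x_{n-k+i})$ equals $I(P_{n-2k-1+i}^k)S + B_{n-k+i}$, where $B_{n-k+i} = (x_{n-2k+i}, x_{n-2k+i+1}, \dots, x_{n-k+i-1}, x_{n-k+i+1}, \dots, x_n)$. -/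
open MvPolynomial

/-- The edge ideal of the `k`-th power of the path on `n` vertices in
`S = K[x_1,…,x_n]` (the variable `X t` for `t : Fin n` is `x_{t+1}` in 1-based labels):
generated by the `x_i x_j` with `0 < j - i ≤ k`. -/
noncomputable def pathIdeal (K : Type*) [Field K] (n k : ℕ) :
    Ideal (MvPolynomial (Fin n) K) :=
  Ideal.span {m | ∃ i j : Fin n, (i : ℕ) < j ∧ (j : ℕ) - i ≤ k ∧ m = X i * X j}

/-- The edge ideal of the `k`-th power of the cycle on `n` vertices in `K[x_1,…,x_n]`. -/
noncomputable def cycleIdeal (K : Type*) [Field K] (n k : ℕ) :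
    Ideal (MvPolynomial (Fin n) K) :=
  Ideal.span {m | ∃ i j : Fin n, (i : ℕ) < j ∧ ((j : ℕ) - i ≤ k ∨ n - k ≤ (j : ℕ) - i) ∧
    m = X i * X j}

/-- The edge ideal, regarded in `K[x_1,…,x_n]`, of the `k`-th power of the path on the
consecutive vertices with 1-based labels `a,…,b`. -/
noncomputable def pathIdealOn (K : Type*) [Field K] (n k a b : ℕ) :
    Ideal (MvPolynomial (Fin n) K) :=
  Ideal.span {m | ∃ i j : Fin n, a ≤ (i : ℕ) + 1 ∧ (j : ℕ) + 1 ≤ b ∧ (i : ℕ) < j ∧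
    (j : ℕ) - i ≤ k ∧ m = X i * X j}

/-- The monomial prime ideal `(x_a, x_{a+1}, …, x_b)` of `K[x_1,…,x_n]` (1-based labels). -/
noncomputable def varSpan (K : Type*) [Field K] (n a b : ℕ) :
    Ideal (MvPolynomial (Fin n) K) :=
  Ideal.span {m | ∃ t : Fin n, a ≤ (t : ℕ) + 1 ∧ (t : ℕ) + 1 ≤ b ∧ m = X t}

/-- The depth of `S/I` with respect to the maximal graded ideal `(x_1,…,x_n)`:
the supremum of lengths of (weakly) regular sequences on `S/I` from `(x_1,…,x_n)`. -/
noncomputable def pdepth {K : Type*} [Field K] {n : ℕ} (I : Ideal (MvPolynomial (Fin n) K)) :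
    ℕ∞ :=
  sSup {d : ℕ∞ | ∃ rs : List (MvPolynomial (Fin n) K),
    (∀ r ∈ rs, r ∈ Ideal.span (Set.range (X (R := K) (σ := Fin n)))) ∧
    RingTheory.Sequence.IsWeaklyRegular (MvPolynomial (Fin n) K ⧸ I) rs ∧
    (rs.length : ℕ∞) = d}

/-- The set of exponent vectors of monomials belonging to a (monomial) ideal `I`. -/
def monSet {K : Type*} [Field K] {n : ℕ} (I : Ideal (MvPolynomial (Fin n) K)) :
    Set (Fin n → ℕ) :=
  {a | (∏ i, X i ^ a i : MvPolynomial (Fin n) K) ∈ I}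

/-- The set of exponent vectors of the monomials of the Stanley space `x^a K[W]`. -/
def stanleyInterval {n : ℕ} (a : Fin n → ℕ) (W : Finset (Fin n)) : Set (Fin n → ℕ) :=
  {c | (∀ i, a i ≤ c i) ∧ ∀ i ∉ W, c i = a i}

/-- The Stanley depth of `J/I` for monomial ideals `I ⊆ J` of `K[x_1,…,x_n]`: the largest
`d` such that the monomials of `J \ I` can be partitioned into finitely many Stanley spaces
`x^a K[W]` with `|W| ≥ d` (by Herzog–Vladoiu–Zheng this agrees with the Stanley depth of the
`ℤⁿ`-graded module `J/I` defined via Stanley decompositions). -/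
noncomputable def sdepthQuot {K : Type*} [Field K] {n : ℕ}
    (I J : Ideal (MvPolynomial (Fin n) K)) : ℕ :=
  sSup {d : ℕ | ∃ P : Finset ((Fin n → ℕ) × Finset (Fin n)),
    (∀ p ∈ P, d ≤ p.2.card) ∧
    ∀ c : Fin n → ℕ, (c ∈ monSet J ∧ c ∉ monSet I) ↔
      ∃! p, p ∈ P ∧ c ∈ stanleyInterval p.1 p.2}

/-!
For a monomial ideal, the colon by a variable `x_v` is generated by the generators with `x_v`
deleted: here the `x_a x_b` of the edges avoiding `v` and the `x_t` for the neighbours `t` of `v`.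
Since `v + k ≥ n`, the neighbours of `v` are all vertices from `v - k` on except `v` itself, and
they absorb every edge `x_a x_b` with `b ≥ v - k`; the edges left over are those of the path on
`1, …, v - k - 1`.
-/

namespace MvPolynomial

section MonomialIdeal

variable {σ R : Type*} [CommSemiring R]

theorem X_mul_X_eq_monomial (a b : σ) :
    (X a * X b : MvPolynomial σ R) = monomial (Finsupp.single a 1 + Finsupp.single b 1) 1 := by
  rw [X, X, monomial_mul, one_mul]

theorem span_X_mul_X_eq_span_monomial (P : σ → σ → Prop) :
    Ideal.span {p : MvPolynomial σ R | ∃ a b, P a b ∧ p = X a * X b} =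
      Ideal.span ((fun s => monomial s (1 : R)) ''
        {e | ∃ a b, P a b ∧ e = Finsupp.single a 1 + Finsupp.single b 1}) := by
  congr 1
  ext p
  simp only [Set.mem_image]
  constructor
  · rintro ⟨a, b, hab, rfl⟩
    exact ⟨_, ⟨a, b, hab, rfl⟩, (X_mul_X_eq_monomial a b).symm⟩
  · rintro ⟨_, ⟨a, b, hab, rfl⟩, rfl⟩
    exact ⟨a, b, hab, (X_mul_X_eq_monomial a b).symm⟩

theorem mem_colon_span_X_iff {G : Set (σ →₀ ℕ)} {v : σ} {p : MvPolynomial σ R} :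
    p ∈ (Ideal.span ((fun s => monomial s (1 : R)) '' G)).colon
        ((Ideal.span {X v} : Ideal (MvPolynomial σ R)) : Set (MvPolynomial σ R)) ↔
      ∀ m ∈ p.support, ∃ e ∈ G, e ≤ m + Finsupp.single v 1 := by
  simp only [Ideal.mem_colon_span_singleton, mem_ideal_span_monomial_image, support_mul_X,
    Finset.mem_map, addRightEmbedding_apply, forall_exists_index, and_imp,
    forall_apply_eq_imp_iff₂]

theorem mem_of_forall_support_exists_monomial_mem {I : Ideal (MvPolynomial σ R)}
    {p : MvPolynomial σ R} (h : ∀ m ∈ p.support, ∃ f ≤ m, monomial f 1 ∈ I) : p ∈ I := by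
  have : p ∈ Ideal.span ((fun s => monomial s (1 : R)) '' {f | monomial f 1 ∈ I}) :=
    mem_ideal_span_monomial_image.mpr fun m hm => (h m hm).imp fun f ⟨hf, hI⟩ => ⟨hI, hf⟩
  exact Ideal.span_le.mpr (by rintro _ ⟨f, hf, rfl⟩; exact hf) this

end MonomialIdeal

end MvPolynomial

open MvPolynomial

theorem Finsupp.ne_zero_or_eq_of_single_le_add_single {σ : Type*} {a v : σ} {m : σ →₀ ℕ}
    (h : Finsupp.single a 1 ≤ m + Finsupp.single v 1) : m a ≠ 0 ∨ a = v := by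
  classical
  have := h a
  simp only [Finsupp.single_eq_same, Finsupp.add_apply, Finsupp.single_apply] at this
  split_ifs at this with hva
  · exact Or.inr hva.symm
  · exact Or.inl (by omega)

theorem Finsupp.single_add_single_le {σ : Type*} {a b : σ} {m : σ →₀ ℕ} (hab : a ≠ b)
    (ha : m a ≠ 0) (hb : m b ≠ 0) : Finsupp.single a 1 + Finsupp.single b 1 ≤ m := by
  classical
  intro t
  simp only [Finsupp.add_apply, Finsupp.single_apply]
  split_ifs with h1 h2 h2 <;> subst_vars <;> first | omega | exact absurd rfl hab

section PathPower

variable {K : Type*} [Field K] {n k : ℕ}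

theorem pathIdeal_eq_span_monomial :
    pathIdeal K n k = Ideal.span ((fun s => monomial s (1 : K)) ''
      {e | ∃ a b : Fin n, ((a : ℕ) < b ∧ (b : ℕ) - a ≤ k) ∧
        e = Finsupp.single a 1 + Finsupp.single b 1}) := by
  rw [← span_X_mul_X_eq_span_monomial]
  simp only [pathIdeal, and_assoc]

theorem pathIdealOn_le_pathIdeal (a b : ℕ) : pathIdealOn K n k a b ≤ pathIdeal K n k :=
  Ideal.span_mono fun _ ⟨x, y, _, _, hxy, hyx, h⟩ => ⟨x, y, hxy, hyx, h⟩

theorem X_mul_X_mem_pathIdeal {a b : Fin n} (hab : a ≠ b) (ha : (a : ℕ) ≤ b + k)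
    (hb : (b : ℕ) ≤ a + k) : X a * X b ∈ pathIdeal K n k := by
  rcases lt_or_gt_of_ne hab with h | h
  · exact Ideal.subset_span ⟨a, b, h, by omega, rfl⟩
  · rw [mul_comm]
    exact Ideal.subset_span ⟨b, a, h, by omega, rfl⟩

theorem X_mem_varSpan_sup_varSpan {a c : ℕ} {t : Fin n} (ha : a ≤ t + 1) (hc : (t : ℕ) + 1 ≠ c) :
    X t ∈ varSpan K n a (c - 1) ⊔ varSpan K n (c + 1) n := by
  rcases lt_or_gt_of_ne hc with h | h
  · exact Ideal.mem_sup_left (Ideal.subset_span ⟨t, ha, by omega, rfl⟩)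
  · exact Ideal.mem_sup_right (Ideal.subset_span ⟨t, by omega, by omega, rfl⟩)

variable {v : Fin n}

theorem X_mem_colon_X_pathIdeal {t : Fin n} (htv : t ≠ v) (ht : (t : ℕ) ≤ v + k)
    (hv : (v : ℕ) ≤ t + k) :
    X t ∈ (pathIdeal K n k).colon ((Ideal.span {X v} : Ideal (MvPolynomial (Fin n) K)) :
      Set (MvPolynomial (Fin n) K)) :=
  Ideal.mem_colon_span_singleton.mpr (X_mul_X_mem_pathIdeal htv ht hv)

theorem colon_X_pathIdeal_le {J : Ideal (MvPolynomial (Fin n) K)} (hv : n ≤ v + k + 1)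
    (hX : ∀ t : Fin n, t ≠ v → (v : ℕ) ≤ t + k → X t ∈ J)
    (hXX : ∀ a b : Fin n, a < b → (b : ℕ) - a ≤ k → (b : ℕ) + k < v → X a * X b ∈ J) :
    (pathIdeal K n k).colon ((Ideal.span {X v} : Ideal (MvPolynomial (Fin n) K)) :
      Set (MvPolynomial (Fin n) K)) ≤ J := by
  intro p hp
  rw [pathIdeal_eq_span_monomial, mem_colon_span_X_iff] at hp
  refine mem_of_forall_support_exists_monomial_mem fun m hm => ?_
  obtain ⟨_, ⟨a, b, ⟨hab, hba⟩, rfl⟩, hle⟩ := hp m hm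
  replace hab : a < b := Fin.lt_def.mpr hab
  have of_X_mem {t : Fin n} (ht : m t ≠ 0) (hJ : X t ∈ J) : ∃ f ≤ m, monomial f (1 : K) ∈ J :=
    ⟨Finsupp.single t 1, Finsupp.single_le_iff.mpr (Nat.one_le_iff_ne_zero.mpr ht), hJ⟩
  have ha := Finsupp.ne_zero_or_eq_of_single_le_add_single (le_self_add.trans hle)
  have hb := Finsupp.ne_zero_or_eq_of_single_le_add_single (le_add_self.trans hle)
  by_cases hbv : b = v
  · subst hbv
    exact of_X_mem (ha.resolve_right hab.ne) (hX a hab.ne (by omega))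
  by_cases hav : a = v
  · subst hav
    exact of_X_mem (hb.resolve_right hbv) (hX b hbv (by omega))
  by_cases hfar : (b : ℕ) + k < v
  · refine ⟨_, Finsupp.single_add_single_le hab.ne (ha.resolve_right hav)
      (hb.resolve_right hbv), ?_⟩
    rw [← X_mul_X_eq_monomial]
    exact hXX a b hab hba hfar
  · exact of_X_mem (hb.resolve_right hbv) (hX b hbv (by omega))

end PathPower

theorem stmt5 (K : Type*) [Field K] (n k i : ℕ) (hi : i ≤ k - 1)
    (hn : 3 * k + 2 ≤ n) :
    (pathIdeal K n k).colon ((Ideal.span {X (⟨n - k + i - 1, by omega⟩ : Fin n)} : Ideal (MvPolynomial (Fin n) K)) : Set (MvPolynomial (Fin n) K)) =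
      pathIdealOn K n k 1 (n - 2 * k - 1 + i) ⊔
        (varSpan K n (n - 2 * k + i) (n - k + i - 1) ⊔ varSpan K n (n - k + i + 1) n) := by
  set v : Fin n := ⟨n - k + i - 1, by omega⟩
  have hv : (v : ℕ) = n - k + i - 1 := rfl
  apply le_antisymm
  · refine colon_X_pathIdeal_le (by omega) (fun t htv ht => ?_) (fun a b hab hba hb => ?_)
    · exact Ideal.mem_sup_right
        (X_mem_varSpan_sup_varSpan (c := n - k + i) (by omega) fun h => htv (Fin.ext (by omega)))
    · exact Ideal.mem_sup_left (Ideal.subset_span ⟨a, b, by omega, by omega, hab, hba, rfl⟩)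
  · refine sup_le ((pathIdealOn_le_pathIdeal _ _).trans Ideal.le_colon) (sup_le ?_ ?_) <;>
      refine Ideal.span_le.mpr ?_ <;>
      rintro _ ⟨t, ht₁, ht₂, rfl⟩ <;>
      exact X_mem_colon_X_pathIdeal (Fin.ne_of_val_ne (by omega)) (by omega) (by omega)
end

section
/- Let $k \ge 2$ and $n \ge 2k+2$. Then the quotient $S/(I(P_n^k), A_{n-1})$ is isomorphic as a ring to $K[x_1,\dots,x_{n-k-1}]/I(P_{n-k-1}^k)$ adjoined the polynomial variable $x_n$, i.e., $S/(I(P_n^k),A_{n-1}) \cong \big(K[x_1,\dots,x_{n-k-1}]/I(P_{n-k-1}^k)\big)[x_n]$. -/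
open MvPolynomial

/-!
Write `n = m + k + 1`. The other endpoint of an edge `x_i x_n` of `P_n^k` lies in the block
`x_{m+1}, …, x_{m+k}` generating `A_{n-1}`, so modulo `A_{n-1}` every such edge dies and `x_n`
becomes a free variable, while the surviving edges among `x_1, …, x_m` are exactly those of
`P_m^k`. The mutually inverse maps fix `x_1, …, x_m`, exchange `x_n` and `X`, and send the
block to `0`.
-/

section EdgeIdealKernels

variable {K : Type*} [Field K] {n : ℕ} {A : Type*} [Semiring A] [Algebra K A]

theorem X_mul_X_mem_pathIdeal_s6 {k : ℕ} {i j : Fin n} (hij : (i : ℕ) < j) (hjk : (j : ℕ) - i ≤ k) :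
    X i * X j ∈ pathIdeal K n k :=
  Ideal.subset_span ⟨i, j, hij, hjk, rfl⟩

theorem pathIdeal_le_ker {k : ℕ} (f : MvPolynomial (Fin n) K →ₐ[K] A)
    (h : ∀ i j : Fin n, (i : ℕ) < j → (j : ℕ) - i ≤ k → f (X i) * f (X j) = 0) :
    pathIdeal K n k ≤ RingHom.ker f := by
  rw [pathIdeal, Ideal.span_le]
  rintro _ ⟨i, j, hij, hjk, rfl⟩
  simpa using h i j hij hjk

theorem varSpan_le_ker {a b : ℕ} (f : MvPolynomial (Fin n) K →ₐ[K] A)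
    (h : ∀ t : Fin n, a ≤ (t : ℕ) + 1 → (t : ℕ) + 1 ≤ b → f (X t) = 0) :
    varSpan K n a b ≤ RingHom.ker f := by
  rw [varSpan, Ideal.span_le]
  rintro _ ⟨t, hat, htb, rfl⟩
  exact h t hat htb

end EdgeIdealKernels

namespace PathTailQuotient

variable (K : Type*) [Field K] (m k : ℕ)

/-- With `n = m + k + 1` this is the ideal `(I(P_n^k), A_{n-1})`. -/
noncomputable def tailIdeal : Ideal (MvPolynomial (Fin (m + k + 1)) K) :=
  pathIdeal K (m + k + 1) k ⊔ varSpan K (m + k + 1) (m + 1) (m + k)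

noncomputable def varImage (t : Fin (m + k + 1)) :
    Polynomial (MvPolynomial (Fin m) K ⧸ pathIdeal K m k) :=
  if h : (t : ℕ) < m then Polynomial.C (Ideal.Quotient.mk _ (X ⟨t, h⟩))
  else if t = Fin.last _ then Polynomial.X else 0

variable {K m k}

theorem varImage_of_lt (t : Fin (m + k + 1)) (ht : (t : ℕ) < m) :
    varImage K m k t = Polynomial.C (Ideal.Quotient.mk _ (X ⟨t, ht⟩)) :=
  dif_pos ht

theorem varImage_last : varImage K m k (Fin.last _) = Polynomial.X := by
  simp [varImage]

theorem varImage_of_le_of_ne_last (t : Fin (m + k + 1)) (ht : m ≤ t) (hlast : t ≠ Fin.last _) :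
    varImage K m k t = 0 := by
  simp [varImage, ht.not_gt, hlast]

theorem tailIdeal_le_ker_aeval_varImage :
    tailIdeal K m k ≤ RingHom.ker (aeval (R := K) (varImage K m k)) := by
  refine sup_le (pathIdeal_le_ker _ fun i j hij hjk ↦ ?_) (varSpan_le_ker _ fun t hmt htk ↦ ?_)
  · simp only [aeval_X]
    by_cases hjm : (j : ℕ) < m
    · have hmem : X ⟨i, hij.trans hjm⟩ * X ⟨j, hjm⟩ ∈ pathIdeal K m k :=
        X_mul_X_mem_pathIdeal_s6 hij hjk
      rw [varImage_of_lt i (hij.trans hjm), varImage_of_lt j hjm, ← map_mul, ← map_mul,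
        Ideal.Quotient.eq_zero_iff_mem.mpr hmem, map_zero]
    · by_cases hj : j = Fin.last _
      · rw [varImage_of_le_of_ne_last i (by rw [hj, Fin.val_last] at hjk; omega) (by omega), zero_mul]
      · rw [varImage_of_le_of_ne_last j (by omega) hj, mul_zero]
  · rw [aeval_X, varImage_of_le_of_ne_last t (by omega) (Fin.ne_of_val_ne (by rw [Fin.val_last]; omega))]

variable (K m k)

noncomputable def toPolynomial :
    (MvPolynomial (Fin (m + k + 1)) K ⧸ tailIdeal K m k) →ₐ[K]
      Polynomial (MvPolynomial (Fin m) K ⧸ pathIdeal K m k) :=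
  Ideal.Quotient.liftₐ _ (aeval (varImage K m k)) fun _ ha ↦
    tailIdeal_le_ker_aeval_varImage ha

noncomputable def ofPolynomial :
    Polynomial (MvPolynomial (Fin m) K ⧸ pathIdeal K m k) →ₐ[K]
      (MvPolynomial (Fin (m + k + 1)) K ⧸ tailIdeal K m k) :=
  Polynomial.eval₂AlgHom
    (Ideal.Quotient.liftₐ (pathIdeal K m k)
      (aeval fun t ↦ Ideal.Quotient.mk (tailIdeal K m k) (X (Fin.castLE (by omega) t)))
      fun _ ha ↦ pathIdeal_le_ker _ (fun i j hij hjk ↦ by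
        rw [aeval_X, aeval_X, ← map_mul, Ideal.Quotient.eq_zero_iff_mem]
        exact Ideal.mem_sup_left (X_mul_X_mem_pathIdeal_s6 hij hjk)) ha)
    (Ideal.Quotient.mk (tailIdeal K m k) (X (Fin.last _))) fun _ ↦ Commute.all _ _

variable {K m k}

theorem toPolynomial_mk_X (t : Fin (m + k + 1)) :
    toPolynomial K m k (Ideal.Quotient.mk _ (X t)) = varImage K m k t :=
  aeval_X _ _

theorem ofPolynomial_C_mk_X (t : Fin m) :
    ofPolynomial K m k (Polynomial.C (Ideal.Quotient.mk _ (X t))) =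
      Ideal.Quotient.mk _ (X (Fin.castLE (by omega) t)) :=
  (Polynomial.eval₂_C _ _).trans (aeval_X _ _)

theorem ofPolynomial_X :
    ofPolynomial K m k Polynomial.X = Ideal.Quotient.mk _ (X (Fin.last _)) :=
  Polynomial.eval₂_X _ _

variable (K m k)

theorem ofPolynomial_comp_toPolynomial :
    (ofPolynomial K m k).comp (toPolynomial K m k) = AlgHom.id K _ := by
  refine Ideal.Quotient.algHom_ext _ (MvPolynomial.algHom_ext fun t ↦ ?_)
  change ofPolynomial K m k (toPolynomial K m k (Ideal.Quotient.mk _ (X t))) =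
    Ideal.Quotient.mk _ (X t)
  rw [toPolynomial_mk_X]
  rcases lt_or_ge (t : ℕ) m with htm | htm
  · rw [varImage_of_lt t htm, ofPolynomial_C_mk_X]
    rfl
  · by_cases hlast : t = Fin.last _
    · rw [hlast, varImage_last, ofPolynomial_X]
    · rw [varImage_of_le_of_ne_last t htm hlast, map_zero, eq_comm,
        Ideal.Quotient.eq_zero_iff_mem]
      refine Ideal.mem_sup_right (Ideal.subset_span ⟨t, by omega, ?_, rfl⟩)
      have := Fin.val_ne_of_ne hlast
      rw [Fin.val_last] at this
      omega

theorem toPolynomial_comp_ofPolynomial :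
    (toPolynomial K m k).comp (ofPolynomial K m k) = AlgHom.id K _ := by
  refine Polynomial.algHom_ext' (Ideal.Quotient.algHom_ext _ (MvPolynomial.algHom_ext fun t ↦ ?_)) ?_
  · change toPolynomial K m k (ofPolynomial K m k (Polynomial.C (Ideal.Quotient.mk _ (X t)))) =
      Polynomial.C (Ideal.Quotient.mk _ (X t))
    rw [ofPolynomial_C_mk_X, toPolynomial_mk_X, varImage_of_lt _ t.isLt]
    rfl
  · change toPolynomial K m k (ofPolynomial K m k Polynomial.X) = Polynomial.X
    rw [ofPolynomial_X, toPolynomial_mk_X, varImage_last]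

noncomputable def equivPolynomial :
    (MvPolynomial (Fin (m + k + 1)) K ⧸ tailIdeal K m k) ≃ₐ[K]
      Polynomial (MvPolynomial (Fin m) K ⧸ pathIdeal K m k) :=
  AlgEquiv.ofAlgHom (toPolynomial K m k) (ofPolynomial K m k)
    (toPolynomial_comp_ofPolynomial K m k) (ofPolynomial_comp_toPolynomial K m k)

end PathTailQuotient

theorem stmt6_general (K : Type*) [Field K] (n k : ℕ) (hn : 2 * k + 2 ≤ n) :
    Nonempty ((MvPolynomial (Fin n) K ⧸ (pathIdeal K n k ⊔ varSpan K n (n - k) (n - 1))) ≃+*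
      Polynomial (MvPolynomial (Fin (n - k - 1)) K ⧸ pathIdeal K (n - k - 1) k)) := by
  obtain ⟨m, rfl⟩ : ∃ m, n = m + k + 1 := ⟨n - k - 1, by omega⟩
  rw [show m + k + 1 - k - 1 = m by omega, show m + k + 1 - k = m + 1 by omega,
    show m + k + 1 - 1 = m + k by omega]
  exact ⟨(PathTailQuotient.equivPolynomial K m k).toRingEquiv⟩

theorem stmt6 (K : Type*) [Field K] (n k : ℕ) (hk : 2 ≤ k) (hn : 2 * k + 2 ≤ n) :
    Nonempty ((MvPolynomial (Fin n) K ⧸ (pathIdeal K n k ⊔ varSpan K n (n - k) (n - 1))) ≃+*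
      Polynomial (MvPolynomial (Fin (n - k - 1)) K ⧸ pathIdeal K (n - k - 1) k)) :=
  stmt6_general K n k hn
end
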